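/- Let E be a finite-dimensional real inner product space, let p ≥ 2 be an integer, and let f : E → ℝ be C^p-smooth having a local minimizer at 0 (so ∇f(0) = 0). Let T := ker(∇²f(0)), let T⊥ be its orthogonal complement, and let v : U → V be the C^{p−1}-smooth graphical representation of the Morse ravine at 0, i.e. a map defined on a neighborhood U of 0 in T, taking values in a neighborhood V of 0 in T⊥, with v(0) = 0, Dv(0) = 0, and P_{T⊥}(∇f(u + v(u))) = 0 for all u ∈ U. Then there exist constants c₁, c₂ > 0 and a neighborhood W of 0 in E such that for all u ∈ U and w ∈ V with u + w ∈ W: c₁·‖w − v(u)‖² ≤ f(u + w) − f(u + v(u)) ≤ c₂·‖w − v(u)‖². In particular, the Morse ravine of f at 0 is a C^{p−1}-ravine: the retraction R(u + w) := u + v(u) satisfies f(x) − f(R(x)) ≥ c₁‖x − R(x)‖² near 0. -/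

import Mathlib

/-!
At a local minimizer the Hessian `A = ∇²f(0)` is positive semidefinite, hence (finite dimension,
compact unit sphere) uniformly positive definite on `(ker A)ᗮ = Tᗮ`, say with constant `m`; by
continuity `‖∇²f(z) - A‖ ≤ m / 2` on a ball around `0`. For `u + w` near `0`, the segment from
`x = u + v u` to `u + w` lies in that ball and has direction `d = w - v u ∈ Tᗮ`, while
`⟪∇f x, d⟫ = 0` because the graph condition puts `∇f x` in `T`. Hence `φ t = f (x + t • d)` has
`φ' 0 = 0` and `φ'' ∈ [m / 2, ‖A‖ + m / 2] * ‖d‖ ^ 2` on `[0, 1]`, and integrating twice gives both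
quadratic bounds.
-/

open Set Topology InnerProductSpace
open scoped Gradient RealInnerProductSpace

theorem le_of_deriv_eq_zero_of_deriv2_nonneg {ψ ψ' ψ'' : ℝ → ℝ}
    (hψ : ∀ t ∈ Icc (0 : ℝ) 1, HasDerivAt ψ (ψ' t) t)
    (hψ' : ∀ t ∈ Icc (0 : ℝ) 1, HasDerivAt ψ' (ψ'' t) t)
    (h0 : ψ' 0 = 0) (h2 : ∀ t ∈ Icc (0 : ℝ) 1, 0 ≤ ψ'' t) : ψ 0 ≤ ψ 1 := by
  have mono : ∀ {g g' : ℝ → ℝ}, (∀ t ∈ Icc (0 : ℝ) 1, HasDerivAt g (g' t) t) →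
      (∀ t ∈ Icc (0 : ℝ) 1, 0 ≤ g' t) → MonotoneOn g (Icc 0 1) := fun hg hg' =>
    monotoneOn_of_hasDerivWithinAt_nonneg (convex_Icc 0 1)
      (fun t ht => (hg t ht).continuousAt.continuousWithinAt)
      (fun t ht => (hg t (interior_subset ht)).hasDerivWithinAt)
      (fun t ht => hg' t (interior_subset ht))
  have hψ'_nonneg : ∀ t ∈ Icc (0 : ℝ) 1, 0 ≤ ψ' t := fun t ht =>
    h0 ▸ mono hψ' h2 (left_mem_Icc.2 zero_le_one) ht ht.1
  exact mono hψ hψ'_nonneg (left_mem_Icc.2 zero_le_one) (right_mem_Icc.2 zero_le_one) zero_le_one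

theorem div_two_le_sub_of_le_deriv2 {ψ ψ' ψ'' : ℝ → ℝ}
    (hψ : ∀ t ∈ Icc (0 : ℝ) 1, HasDerivAt ψ (ψ' t) t)
    (hψ' : ∀ t ∈ Icc (0 : ℝ) 1, HasDerivAt ψ' (ψ'' t) t)
    (h0 : ψ' 0 = 0) {a : ℝ} (ha : ∀ t ∈ Icc (0 : ℝ) 1, a ≤ ψ'' t) : a / 2 ≤ ψ 1 - ψ 0 := by
  have key := le_of_deriv_eq_zero_of_deriv2_nonneg (ψ := fun t => ψ t - a / 2 * t ^ 2)
    (ψ' := fun t => ψ' t - a * t) (ψ'' := fun t => ψ'' t - a)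
    (fun t ht => (hψ t ht).sub <|
      ((hasDerivAt_pow 2 t).const_mul (a / 2)).congr_deriv (by ring))
    (fun t ht => (hψ' t ht).sub <| by simpa using (hasDerivAt_id t).const_mul a)
    (by simp [h0]) (fun t ht => sub_nonneg.2 (ha t ht))
  linarith

theorem sub_mem_Icc_of_deriv2_mem_Icc {ψ ψ' ψ'' : ℝ → ℝ}
    (hψ : ∀ t ∈ Icc (0 : ℝ) 1, HasDerivAt ψ (ψ' t) t)
    (hψ' : ∀ t ∈ Icc (0 : ℝ) 1, HasDerivAt ψ' (ψ'' t) t)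
    (h0 : ψ' 0 = 0) {a b : ℝ} (hab : ∀ t ∈ Icc (0 : ℝ) 1, ψ'' t ∈ Icc a b) :
    ψ 1 - ψ 0 ∈ Icc (a / 2) (b / 2) := by
  have upper := div_two_le_sub_of_le_deriv2 (ψ := -ψ) (ψ' := -ψ') (ψ'' := -ψ'')
    (fun t ht => (hψ t ht).neg) (fun t ht => (hψ' t ht).neg) (by simp [h0])
    (a := -b) (fun t ht => neg_le_neg (hab t ht).2)
  refine ⟨div_two_le_sub_of_le_deriv2 hψ hψ' h0 fun t ht => (hab t ht).1, ?_⟩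
  simp only [Pi.neg_apply] at upper
  linarith

theorem IsLocalMin.deriv_deriv_nonneg {ψ : ℝ → ℝ} {a : ℝ} (h : IsLocalMin ψ a)
    (hc : ContinuousAt ψ a) : 0 ≤ deriv (deriv ψ) a := by
  by_contra! hneg
  have hmax := isLocalMax_of_deriv_deriv_neg hneg h.deriv_eq_zero hc
  have hconst : ψ =ᶠ[𝓝 a] fun _ => ψ a :=
    (h.and hmax).mono fun _ hz => le_antisymm hz.2 hz.1
  rw [hconst.deriv.deriv_eq] at hneg
  simp at hneg

theorem hasDerivAt_comp_add_smul {E F : Type*} [NormedAddCommGroup E] [NormedSpace ℝ E]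
    [NormedAddCommGroup F] [NormedSpace ℝ F] {g : E → F} {x d : E} {t : ℝ}
    (hg : DifferentiableAt ℝ g (x + t • d)) :
    HasDerivAt (fun s : ℝ => g (x + s • d)) (fderiv ℝ g (x + t • d) d) t :=
  hg.hasFDerivAt.comp_hasDerivAt t <| by
    simpa using ((hasDerivAt_id t).smul_const d).const_add x

theorem exists_pos_mul_norm_sq_le {F : Type*} [NormedAddCommGroup F] [NormedSpace ℝ F]
    [FiniteDimensional ℝ F] {q : F → ℝ} (hq : Continuous q)
    (hsmul : ∀ (c : ℝ) (x : F), q (c • x) = c ^ 2 * q x) (hpos : ∀ x ≠ 0, 0 < q x) :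
    ∃ m > 0, ∀ x, m * ‖x‖ ^ 2 ≤ q x := by
  have hq0 : q 0 = 0 := by simpa using hsmul 0 0
  rcases subsingleton_or_nontrivial F with hF | hF
  · exact ⟨1, one_pos, fun x => by simp [Subsingleton.elim x 0, hq0]⟩
  obtain ⟨e, he, hmin⟩ := (isCompact_sphere (0 : F) 1).exists_isMinOn
    (NormedSpace.sphere_nonempty.2 zero_le_one) hq.continuousOn
  have he0 : e ≠ 0 := ne_zero_of_mem_unit_sphere ⟨e, he⟩
  refine ⟨q e, hpos e he0, fun x => ?_⟩
  rcases eq_or_ne x 0 with rfl | hx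
  · simp [hq0]
  have hx' : 0 < ‖x‖ := norm_pos_iff.2 hx
  have hunit : ‖x‖⁻¹ • x ∈ Metric.sphere (0 : F) 1 := by
    simp [norm_smul, hx'.ne']
  have h : q e ≤ q (‖x‖⁻¹ • x) := hmin hunit
  rw [hsmul, inv_pow] at h
  rwa [le_inv_mul_iff₀ (by positivity), mul_comm] at h

theorem norm_le_norm_add_of_inner_eq_zero {F : Type*} [NormedAddCommGroup F]
    [InnerProductSpace ℝ F] {x y : F} (h : ⟪x, y⟫_ℝ = 0) : ‖x‖ ≤ ‖x + y‖ := by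
  have := norm_add_sq_eq_norm_sq_add_norm_sq_real h
  nlinarith [norm_nonneg x, norm_nonneg (x + y)]

section PositiveOperator

variable {E : Type*} [NormedAddCommGroup E] [InnerProductSpace ℝ E] {A : E →L[ℝ] E}

theorem ContinuousLinearMap.IsPositive.apply_eq_zero_of_inner_apply_self_eq_zero
    (hA : A.IsPositive) {x : E} (hx : ⟪A x, x⟫_ℝ = 0) : A x = 0 := by
  have hquad : ∀ s : ℝ, 0 ≤ ⟪A (A x), A x⟫_ℝ * (s * s) + (-2 * ‖A x‖ ^ 2) * s + 0 := fun s => by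
    have h := hA.inner_nonneg_left (x - s • A x)
    have hsymm : ⟪A (A x), x⟫_ℝ = ‖A x‖ ^ 2 := by
      rw [hA.inner_left_eq_inner_right, real_inner_self_eq_norm_sq]
    simp only [map_sub, map_smul, inner_sub_left, inner_sub_right, inner_smul_left,
      inner_smul_right, hx, hsymm, real_inner_self_eq_norm_sq, RCLike.conj_to_real] at h
    linarith
  have hdisc := discrim_le_zero hquad
  rw [discrim] at hdisc
  simpa using (show (‖A x‖ ^ 2) ^ 2 = 0 by nlinarith [sq_nonneg (‖A x‖ ^ 2)])

theorem ContinuousLinearMap.IsPositive.exists_pos_mul_norm_sq_le_inner [FiniteDimensional ℝ E]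
    (hA : A.IsPositive) :
    ∃ m > 0, ∀ d ∈ (LinearMap.ker (A : E →ₗ[ℝ] E))ᗮ, m * ‖d‖ ^ 2 ≤ ⟪A d, d⟫_ℝ := by
  set K := (LinearMap.ker (A : E →ₗ[ℝ] E))ᗮ
  obtain ⟨m, hm, hle⟩ := exists_pos_mul_norm_sq_le (q := fun d : K => ⟪A d, d⟫_ℝ)
    (by fun_prop) (fun c d => by
      simp only [SetLike.val_smul, map_smul, inner_smul_left, inner_smul_right,
        Real.ringHom_apply]
      ring)
    (fun d hd => by
      refine (hA.inner_nonneg_left d).lt_of_ne' fun h0 => hd ?_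
      have hker : (d : E) ∈ LinearMap.ker (A : E →ₗ[ℝ] E) :=
        hA.apply_eq_zero_of_inner_apply_self_eq_zero h0
      exact Subtype.ext (Submodule.disjoint_def.1 (Submodule.orthogonal_disjoint _) _ hker d.2))
  exact ⟨m, hm, fun d hd => hle ⟨d, hd⟩⟩

theorem abs_inner_apply_self_le (B : E →L[ℝ] E) (d : E) : |⟪B d, d⟫_ℝ| ≤ ‖B‖ * ‖d‖ ^ 2 :=
  calc |⟪B d, d⟫_ℝ| ≤ ‖B d‖ * ‖d‖ := abs_real_inner_le_norm _ _
    _ ≤ ‖B‖ * ‖d‖ * ‖d‖ := by gcongr; exact B.le_opNorm d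
    _ = ‖B‖ * ‖d‖ ^ 2 := by ring

theorem inner_apply_self_mem_Icc_of_norm_sub_le {B : E →L[ℝ] E} {m ε : ℝ} {d : E}
    (hA : m * ‖d‖ ^ 2 ≤ ⟪A d, d⟫_ℝ) (hB : ‖B - A‖ ≤ ε) :
    ⟪B d, d⟫_ℝ ∈ Icc ((m - ε) * ‖d‖ ^ 2) ((‖A‖ + ε) * ‖d‖ ^ 2) := by
  have hBA := (abs_le.1 ((abs_inner_apply_self_le (B - A) d).trans
    (mul_le_mul_of_nonneg_right hB (sq_nonneg _))))
  have hAd := (abs_le.1 (abs_inner_apply_self_le A d)).2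
  simp only [sub_apply, inner_sub_left] at hBA
  constructor <;> nlinarith

end PositiveOperator

section Hessian

variable {E : Type*} [NormedAddCommGroup E] [InnerProductSpace ℝ E] [CompleteSpace E] {f : E → ℝ}

theorem ContDiff.gradient {n : WithTop ℕ∞} (hf : ContDiff ℝ (n + 1) f) : ContDiff ℝ n (∇ f) :=
  (toDual ℝ E).symm.contDiff.comp (hf.fderiv_right le_rfl)

theorem inner_fderiv_gradient_apply (f : E → ℝ) (x v w : E) :
    ⟪fderiv ℝ (∇ f) x v, w⟫_ℝ = fderiv ℝ (fderiv ℝ f) x v w := by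
  have h : ∇ f = (toDual ℝ E).symm ∘ fderiv ℝ f := rfl
  rw [h, LinearIsometryEquiv.comp_fderiv]
  exact toDual_symm_apply

theorem ContDiffAt.isSymmetric_fderiv_gradient {x : E} (hf : ContDiffAt ℝ 2 f x) :
    (fderiv ℝ (∇ f) x).IsSymmetric := fun v w => by
  change ⟪fderiv ℝ (∇ f) x v, w⟫_ℝ = ⟪v, fderiv ℝ (∇ f) x w⟫_ℝ
  rw [← real_inner_comm v, inner_fderiv_gradient_apply, inner_fderiv_gradient_apply,
    (hf.isSymmSndFDerivAt (by simp)).eq]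

theorem hasDerivAt_comp_add_smul_of_gradient {x d : E} {t : ℝ}
    (hf : DifferentiableAt ℝ f (x + t • d)) :
    HasDerivAt (fun s : ℝ => f (x + s • d)) ⟪∇ f (x + t • d), d⟫_ℝ t := by
  simpa using hasDerivAt_comp_add_smul hf

theorem hasDerivAt_inner_gradient_comp_add_smul {x d : E} {t : ℝ}
    (hf : DifferentiableAt ℝ (∇ f) (x + t • d)) :
    HasDerivAt (fun s : ℝ => ⟪∇ f (x + s • d), d⟫_ℝ) ⟪fderiv ℝ (∇ f) (x + t • d) d, d⟫_ℝ t := by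
  simpa using (hasDerivAt_comp_add_smul hf).inner ℝ (hasDerivAt_const t d)

theorem IsLocalMin.isPositive_fderiv_gradient {x : E} (hf : ContDiff ℝ 2 f)
    (hmin : IsLocalMin f x) : (fderiv ℝ (∇ f) x).IsPositive := by
  refine (ContinuousLinearMap.isPositive_iff _).2
    ⟨hf.contDiffAt.isSymmetric_fderiv_gradient, fun y => ?_⟩
  have hdf : Differentiable ℝ f := hf.differentiable two_ne_zero
  have hdg : Differentiable ℝ (∇ f) := (hf.gradient (n := 1)).differentiable one_ne_zero
  have hcont : Continuous fun s : ℝ => f (x + s • y) := hdf.continuous.comp (by fun_prop)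
  have hline : IsLocalMin (fun s : ℝ => f (x + s • y)) 0 :=
    (by simpa using hmin : IsLocalMin f (x + (0 : ℝ) • y)).comp_continuous
      (g := fun s : ℝ => x + s • y) (by fun_prop)
  have hderiv : deriv (fun s : ℝ => f (x + s • y)) = fun s => ⟪∇ f (x + s • y), y⟫_ℝ :=
    funext fun s => (hasDerivAt_comp_add_smul_of_gradient (hdf _)).deriv
  have h2 := hline.deriv_deriv_nonneg hcont.continuousAt
  rwa [hderiv, (hasDerivAt_inner_gradient_comp_add_smul (hdg _)).deriv, zero_smul,
    add_zero] at h2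

theorem sub_mem_Icc_of_inner_fderiv_gradient_mem_Icc (hf : Differentiable ℝ f)
    (hg : Differentiable ℝ (∇ f)) {x d : E} (hx : ⟪∇ f x, d⟫_ℝ = 0) {a b : ℝ}
    (hab : ∀ t ∈ Icc (0 : ℝ) 1, ⟪fderiv ℝ (∇ f) (x + t • d) d, d⟫_ℝ ∈ Icc a b) :
    f (x + d) - f x ∈ Icc (a / 2) (b / 2) := by
  simpa using sub_mem_Icc_of_deriv2_mem_Icc (ψ := fun s => f (x + s • d))
    (fun t _ => hasDerivAt_comp_add_smul_of_gradient (hf _))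
    (fun t _ => hasDerivAt_inner_gradient_comp_add_smul (hg _)) (by simpa using hx) hab

theorem sub_mem_Icc_of_norm_fderiv_gradient_sub_le (hf : Differentiable ℝ f)
    (hg : Differentiable ℝ (∇ f)) {A : E →L[ℝ] E} {s : Set E} (hs : Convex ℝ s) {m ε : ℝ}
    (hH : ∀ z ∈ s, ‖fderiv ℝ (∇ f) z - A‖ ≤ ε) {x y : E} (hx : x ∈ s) (hy : y ∈ s)
    (hA : m * ‖y - x‖ ^ 2 ≤ ⟪A (y - x), y - x⟫_ℝ) (hcrit : ⟪∇ f x, y - x⟫_ℝ = 0) :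
    f y - f x ∈ Icc ((m - ε) / 2 * ‖y - x‖ ^ 2) ((‖A‖ + ε) / 2 * ‖y - x‖ ^ 2) := by
  have key := sub_mem_Icc_of_inner_fderiv_gradient_mem_Icc hf hg hcrit fun t ht =>
    inner_apply_self_mem_Icc_of_norm_sub_le hA (hH _ (hs.add_smul_sub_mem hx hy ht))
  rw [add_sub_cancel] at key
  constructor <;> linarith [key.1, key.2]

end Hessian

theorem IsLocalMin.exists_sub_mem_Icc_of_mem_orthogonal_ker
    {E : Type*} [NormedAddCommGroup E] [InnerProductSpace ℝ E] [FiniteDimensional ℝ E]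
    {f : E → ℝ} {x₀ : E} (hf : ContDiff ℝ 2 f) (hmin : IsLocalMin f x₀) :
    ∃ c₁ > 0, ∃ c₂ > 0, ∃ δ > 0, ∀ x ∈ Metric.ball x₀ δ, ∀ y ∈ Metric.ball x₀ δ,
      y - x ∈ (LinearMap.ker (fderiv ℝ (∇ f) x₀ : E →ₗ[ℝ] E))ᗮ → ⟪∇ f x, y - x⟫_ℝ = 0 →
        f y - f x ∈ Icc (c₁ * ‖y - x‖ ^ 2) (c₂ * ‖y - x‖ ^ 2) := by
  have hg : ContDiff ℝ 1 (∇ f) := hf.gradient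
  set A := fderiv ℝ (∇ f) x₀
  obtain ⟨m, hm, hcoer⟩ := (hmin.isPositive_fderiv_gradient hf).exists_pos_mul_norm_sq_le_inner
  obtain ⟨δ, hδ, hHδ⟩ : ∃ δ > 0, ∀ z ∈ Metric.ball x₀ δ, ‖fderiv ℝ (∇ f) z - A‖ ≤ m / 2 :=
    Metric.eventually_nhds_iff_ball.1 <| by
      simpa only [Metric.mem_closedBall, dist_eq_norm] using
        ((hg.continuous_fderiv one_ne_zero).tendsto x₀).eventually
          (Metric.closedBall_mem_nhds A (half_pos hm))
  refine ⟨m / 4, by positivity, (‖A‖ + m / 2) / 2, by positivity, δ, hδ,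
    fun x hx y hy hK hcrit => ?_⟩
  have key := sub_mem_Icc_of_norm_fderiv_gradient_sub_le (hf.differentiable two_ne_zero)
    (hg.differentiable one_ne_zero) (convex_ball x₀ δ) hHδ hx hy (hcoer _ hK) hcrit
  rwa [show (m - m / 2) / 2 = m / 4 by ring] at key

theorem morse_ravine_is_ravine_general
    {E : Type*} [NormedAddCommGroup E] [InnerProductSpace ℝ E] [FiniteDimensional ℝ E]
    (p : ℕ) (hp : 2 ≤ p) (f : E → ℝ) (hf : ContDiff ℝ p f)
    (hmin : IsLocalMin f 0)
    (T : Submodule ℝ E) (hT : T = LinearMap.ker (fderiv ℝ (gradient f) 0 : E →ₗ[ℝ] E))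
    (U : Set T) (hU : IsOpen U) (hU0 : (0 : T) ∈ U)
    (V : Set Tᗮ)
    (v : T → Tᗮ) (hv : ContDiffOn ℝ (p - 1 : ℕ) v U)
    (hv0 : v 0 = 0)
    (hgraph : ∀ u ∈ U, Tᗮ.orthogonalProjectionOnto (gradient f ((u : E) + ((v u : Tᗮ) : E))) = 0) :
    ∃ c₁ c₂ : ℝ, 0 < c₁ ∧ 0 < c₂ ∧ ∃ W ∈ nhds (0 : E),
      ∀ u ∈ U, ∀ w ∈ V, (u : E) + (w : E) ∈ W →
        c₁ * ‖w - v u‖ ^ 2 ≤ f ((u : E) + (w : E)) - f ((u : E) + ((v u : Tᗮ) : E)) ∧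
        f ((u : E) + (w : E)) - f ((u : E) + ((v u : Tᗮ) : E)) ≤ c₂ * ‖w - v u‖ ^ 2 := by
  obtain ⟨c₁, hc₁, c₂, hc₂, δ, hδ, hquad⟩ :=
    hmin.exists_sub_mem_Icc_of_mem_orthogonal_ker (hf.of_le (by exact_mod_cast hp))
  rw [← hT] at hquad
  obtain ⟨ρ, hρ, hvρ⟩ : ∃ ρ > 0, ∀ u : T, ‖u‖ < ρ → ‖v u‖ < δ / 2 := by
    have hvc : ContinuousAt v 0 := hv.continuousOn.continuousAt (hU.mem_nhds hU0)
    simpa [hv0] using Metric.continuousAt_iff.1 hvc (δ / 2) (by positivity)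
  refine ⟨c₁, c₂, hc₁, hc₂, Metric.ball 0 (min ρ (δ / 2)), Metric.ball_mem_nhds _ (by positivity),
    fun u hu w _ huw => ?_⟩
  rw [mem_ball_zero_iff, lt_min_iff] at huw
  have hu_le : ‖(u : E)‖ ≤ ‖(u : E) + w‖ :=
    norm_le_norm_add_of_inner_eq_zero (Submodule.inner_right_of_mem_orthogonal u.2 w.2)
  have hx : (u : E) + v u ∈ Metric.ball (0 : E) δ := by
    have := hvρ u (hu_le.trans_lt huw.1)
    rw [mem_ball_zero_iff]
    calc ‖(u : E) + v u‖ ≤ ‖(u : E)‖ + ‖v u‖ := norm_add_le _ _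
      _ < δ := by linarith
  have hd : (u : E) + w - (u + v u) = ((w - v u : Tᗮ) : E) := by simp
  have hcrit : ⟪∇ f (u + v u), (u : E) + w - (u + v u)⟫_ℝ = 0 := hd ▸
    Submodule.inner_left_of_mem_orthogonal (w - v u).2
      (Submodule.orthogonalProjectionOnto_eq_zero_iff.1 (hgraph u hu))
  have key := hquad _ hx _ (mem_ball_zero_iff.2 (huw.2.trans (half_lt_self hδ)))
    (hd ▸ (w - v u).2) hcrit
  rwa [show ‖(u : E) + w - (u + v u)‖ = ‖w - v u‖ by rw [hd]; rfl] at key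

/-- **The Morse ravine is a ravine (Morse lemma with parameters).**
If `f : E → ℝ` is `C^p`-smooth (`p ≥ 2`) with a local minimizer at `0`,
`T := ker(∇²f(0))`, and `v : U → V` is the `C^{p-1}` graphical representation of the
Morse ravine at `0` (so `v 0 = 0`, `Dv(0) = 0`, and `P_{Tᗮ}(∇f(u + v u)) = 0` on `U`),
then there are constants `c₁, c₂ > 0` and a neighborhood `W` of `0` such that
`c₁‖w − v u‖² ≤ f(u + w) − f(u + v u) ≤ c₂‖w − v u‖²` whenever `u ∈ U`, `w ∈ V`
and `u + w ∈ W`. -/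
theorem morse_ravine_is_ravine
    {E : Type*} [NormedAddCommGroup E] [InnerProductSpace ℝ E] [FiniteDimensional ℝ E]
    (p : ℕ) (hp : 2 ≤ p) (f : E → ℝ) (hf : ContDiff ℝ p f)
    (hmin : IsLocalMin f 0) (hcrit : gradient f 0 = 0)
    (T : Submodule ℝ E) (hT : T = LinearMap.ker (fderiv ℝ (gradient f) 0 : E →ₗ[ℝ] E))
    (U : Set T) (hU : IsOpen U) (hU0 : (0 : T) ∈ U)
    (V : Set Tᗮ) (hV : IsOpen V) (hV0 : (0 : Tᗮ) ∈ V)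
    (v : T → Tᗮ) (hv : ContDiffOn ℝ (p - 1 : ℕ) v U)
    (hv0 : v 0 = 0) (hdv : fderiv ℝ v 0 = 0)
    (hvV : ∀ u ∈ U, v u ∈ V)
    (hgraph : ∀ u ∈ U, Tᗮ.orthogonalProjectionOnto (gradient f ((u : E) + ((v u : Tᗮ) : E))) = 0) :
    ∃ c₁ c₂ : ℝ, 0 < c₁ ∧ 0 < c₂ ∧ ∃ W ∈ nhds (0 : E),
      ∀ u ∈ U, ∀ w ∈ V, (u : E) + (w : E) ∈ W →
        c₁ * ‖w - v u‖ ^ 2 ≤ f ((u : E) + (w : E)) - f ((u : E) + ((v u : Tᗮ) : E)) ∧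
        f ((u : E) + (w : E)) - f ((u : E) + ((v u : Tᗮ) : E)) ≤ c₂ * ‖w - v u‖ ^ 2 :=
  morse_ravine_is_ravine_general p hp f hf hmin T hT U hU hU0 V v hv hv0 hgraph
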